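/- arXiv:2108.06358 — 3 statements merged into one kernel-verified Lean document; each statement's English description precedes it below -/
import Mathlib

section
/- Let R be a commutative ring, and let E(2,R) be the subgroup of SL(2,R) generated by all upper triangular and all lower triangular matrices of SL(2,R). Then every γ ∈ E(2,R) can be written as γ = W(a₁)·W(a₂)·⋯·W(a_k)·D, where k ≥ 0, a₁,…,a_k ∈ R with a_i ∉ {0, 1, −1} whenever 1 < i < k, and D = [[ω, 0], [0, ω⁻¹]] for some unit ω ∈ Rˣ. -/
/-!
A triangular matrix of `SL(2,R)` is `W(x) W(0) D(ω)` or `W(0) W(y) D(ω)`, and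
`D(ω) W(a) D(ω) = W(ω² a)`, so it suffices to show that a reduced word `W(a₁) ⋯ W(a_k) D(ω)`
stays reduced after right multiplication by a Cohn matrix `W(b)`. If the entry `a_k` that becomes
interior lies in `{0, 1, -1}`, one of
`W(x) W(0) W(b) = W(x + b) D(-1)`, `W(x) W(1) W(b) = W(x - 1) W(b - 1)` and
`W(x) W(-1) W(b) = W(x + 1) W(b + 1) D(-1)` shortens the word, and induction on its length
finishes.
-/

open Matrix

/-- The Cohn matrix `W(α) = [[α, 1], [−1, 0]]` as an element of `SL(2,R)`. -/
def CohnMatrix {R : Type*} [CommRing R] (a : R) : Matrix.SpecialLinearGroup (Fin 2) R :=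
  ⟨!![a, 1; -1, 0], by simp [Matrix.det_fin_two_of]⟩

/-- `E(2,R)`: the subgroup of `SL(2,R)` generated by all upper triangular and all lower
triangular matrices. -/
def ElemSubgroup (R : Type*) [CommRing R] : Subgroup (Matrix.SpecialLinearGroup (Fin 2) R) :=
  Subgroup.closure {γ | γ.1 1 0 = 0 ∨ γ.1 0 1 = 0}

section

variable {R : Type*} [CommRing R]

def diagUnit (ω : Rˣ) : SpecialLinearGroup (Fin 2) R :=
  ⟨!![(ω : R), 0; 0, ((ω⁻¹ : Rˣ) : R)], by simp [det_fin_two_of]⟩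

@[simp]
theorem coe_diagUnit (ω : Rˣ) :
    (diagUnit ω : Matrix (Fin 2) (Fin 2) R) = !![(ω : R), 0; 0, ((ω⁻¹ : Rˣ) : R)] :=
  rfl

@[simp]
theorem coe_cohnMatrix (a : R) : (CohnMatrix a : Matrix (Fin 2) (Fin 2) R) = !![a, 1; -1, 0] :=
  rfl

@[simp]
theorem diagUnit_one : diagUnit (1 : Rˣ) = 1 := by
  ext i j; fin_cases i <;> fin_cases j <;> simp

theorem diagUnit_mul (ω ω' : Rˣ) : diagUnit ω * diagUnit ω' = diagUnit (ω * ω') := by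
  ext i j; fin_cases i <;> fin_cases j <;> simp [mul_apply, mul_comm]

namespace CohnMatrix

theorem mul_zero_mul (x y : R) :
    CohnMatrix x * CohnMatrix 0 * CohnMatrix y = CohnMatrix (x + y) * diagUnit (-1) := by
  ext i j; fin_cases i <;> fin_cases j <;> simp [mul_apply, Fin.sum_univ_two]

theorem mul_one_mul (x y : R) :
    CohnMatrix x * CohnMatrix 1 * CohnMatrix y = CohnMatrix (x - 1) * CohnMatrix (y - 1) := by
  ext i j; fin_cases i <;> fin_cases j <;> simp [mul_apply, Fin.sum_univ_two] <;> ring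

theorem mul_neg_one_mul (x y : R) :
    CohnMatrix x * CohnMatrix (-1) * CohnMatrix y =
      CohnMatrix (x + 1) * CohnMatrix (y + 1) * diagUnit (-1) := by
  ext i j; fin_cases i <;> fin_cases j <;> simp [mul_apply, Fin.sum_univ_two] <;> ring

end CohnMatrix

theorem diagUnit_mul_cohnMatrix_mul_diagUnit (ω : Rˣ) (a : R) :
    diagUnit ω * CohnMatrix a * diagUnit ω = CohnMatrix ((ω : R) ^ 2 * a) := by
  ext i j; fin_cases i <;> fin_cases j <;> simp [mul_apply, Fin.sum_univ_two]
  ring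

theorem exists_eq_cohnMatrix_mul_cohnMatrix_zero_mul_diagUnit
    (t : SpecialLinearGroup (Fin 2) R) (ht : t.1 1 0 = 0) :
    ∃ x ω, t = CohnMatrix x * CohnMatrix 0 * diagUnit ω := by
  have hdet : t.1 0 0 * t.1 1 1 = 1 := by
    have h := t.det_coe; rw [det_fin_two, ht] at h; simpa using h
  refine ⟨-(t.1 0 1 * t.1 0 0), ⟨-(t.1 0 0), -(t.1 1 1), by simpa, by simpa [mul_comm]⟩, ?_⟩
  ext i j; fin_cases i <;> fin_cases j <;> simp [mul_apply, Fin.sum_univ_two, ht]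
  linear_combination (- t.1 0 1) * hdet

theorem exists_eq_cohnMatrix_zero_mul_cohnMatrix_mul_diagUnit
    (t : SpecialLinearGroup (Fin 2) R) (ht : t.1 0 1 = 0) :
    ∃ y ω, t = CohnMatrix 0 * CohnMatrix y * diagUnit ω := by
  have hdet : t.1 0 0 * t.1 1 1 = 1 := by
    have h := t.det_coe; rw [det_fin_two, ht] at h; simpa using h
  refine ⟨t.1 1 0 * t.1 1 1, ⟨-(t.1 0 0), -(t.1 1 1), by simpa, by simpa [mul_comm]⟩, ?_⟩
  ext i j; fin_cases i <;> fin_cases j <;> simp [mul_apply, Fin.sum_univ_two, ht]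
  linear_combination (- t.1 1 0) * hdet

def cohnProd (l : List R) : SpecialLinearGroup (Fin 2) R :=
  (l.map CohnMatrix).prod

@[simp]
theorem cohnProd_nil : cohnProd ([] : List R) = 1 := rfl

@[simp]
theorem cohnProd_append (l l' : List R) : cohnProd (l ++ l') = cohnProd l * cohnProd l' := by
  simp [cohnProd]

@[simp]
theorem cohnProd_cons (x : R) (l : List R) : cohnProd (x :: l) = CohnMatrix x * cohnProd l := by
  simp [cohnProd]

def IsCohnReduced (l : List R) : Prop :=
  ∀ (i : ℕ) (h : i + 1 < l.length), 0 < i → l[i] ≠ 0 ∧ l[i] ≠ 1 ∧ l[i] ≠ -1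

namespace IsCohnReduced

theorem of_length_le_two {l : List R} (hl : l.length ≤ 2) : IsCohnReduced l :=
  fun _ _ _ ↦ by omega

theorem replace_last_two {l : List R} {x y : R} (hl : IsCohnReduced (l ++ [x] ++ [y])) (z : R) :
    IsCohnReduced (l ++ [z]) := by
  intro i hi h0
  have hil : i < l.length := by simp at hi; omega
  simpa [List.getElem_append_left hil] using hl i (by simp; omega) h0

theorem append_pair {l : List R} {y : R} (hy : y ≠ 0 ∧ y ≠ 1 ∧ y ≠ -1)
    (hl : IsCohnReduced (l ++ [y])) (b : R) : IsCohnReduced (l ++ [y, b]) := by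
  intro i hi h0
  simp only [List.length_append, List.length_cons, List.length_nil] at hi
  rcases Nat.lt_or_ge i l.length with hil | hil
  · simpa [List.getElem_append_left hil] using hl i (by simp; omega) h0
  · obtain rfl : i = l.length := by omega
    simpa using hy

end IsCohnReduced

theorem exists_cohnProd_concat_mul_cohnMatrix (l : List R) :
    ∀ y b : R, IsCohnReduced (l ++ [y]) → ∃ l' ω, IsCohnReduced l' ∧
      cohnProd (l ++ [y]) * CohnMatrix b = cohnProd l' * diagUnit ω := by
  induction l using List.reverseRecOn with
  | nil =>
    intro y b _
    exact ⟨[y, b], 1, .of_length_le_two (by simp), by simp⟩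
  | append_singleton l x ih =>
    intro y b hl
    have hprod : ∀ c, cohnProd (l ++ [x] ++ [y]) * CohnMatrix c =
        cohnProd l * (CohnMatrix x * CohnMatrix y * CohnMatrix c) := by
      intro c; simp [mul_assoc]
    by_cases hy0 : y = 0
    · subst hy0
      refine ⟨l ++ [x + b], -1, hl.replace_last_two _, ?_⟩
      rw [hprod, CohnMatrix.mul_zero_mul]; simp [mul_assoc]
    by_cases hy1 : y = 1
    · subst hy1
      obtain ⟨l', ω, hl', h⟩ := ih (x - 1) (b - 1) (hl.replace_last_two _)
      refine ⟨l', ω, hl', ?_⟩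
      rw [hprod, CohnMatrix.mul_one_mul, ← h]; simp [mul_assoc]
    by_cases hy2 : y = -1
    · subst hy2
      obtain ⟨l', ω, hl', h⟩ := ih (x + 1) (b + 1) (hl.replace_last_two _)
      refine ⟨l', ω * -1, hl', ?_⟩
      rw [hprod, CohnMatrix.mul_neg_one_mul, ← diagUnit_mul, ← mul_assoc (cohnProd l'), ← h]
      simp [mul_assoc]
    exact ⟨l ++ [x] ++ [y, b], 1, hl.append_pair ⟨hy0, hy1, hy2⟩ b, by simp [mul_assoc]⟩

theorem exists_cohnProd_mul_cohnMatrix {l : List R} (hl : IsCohnReduced l) (b : R) :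
    ∃ l' ω, IsCohnReduced l' ∧ cohnProd l * CohnMatrix b = cohnProd l' * diagUnit ω := by
  rcases l.eq_nil_or_concat' with rfl | ⟨l, y, rfl⟩
  · exact ⟨[b], 1, .of_length_le_two (by simp), by simp⟩
  · exact exists_cohnProd_concat_mul_cohnMatrix l y b hl

def HasCohnDecomposition (γ : SpecialLinearGroup (Fin 2) R) : Prop :=
  ∃ l ω, IsCohnReduced l ∧ γ = cohnProd l * diagUnit ω

namespace HasCohnDecomposition

theorem one : HasCohnDecomposition (1 : SpecialLinearGroup (Fin 2) R) :=
  ⟨[], 1, .of_length_le_two (by simp), by simp⟩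

theorem mul_diagUnit {γ : SpecialLinearGroup (Fin 2) R} (hγ : HasCohnDecomposition γ)
    (ω : Rˣ) : HasCohnDecomposition (γ * diagUnit ω) := by
  obtain ⟨l, ω', hl, rfl⟩ := hγ
  exact ⟨l, ω' * ω, hl, by rw [mul_assoc, diagUnit_mul]⟩

theorem mul_cohnMatrix {γ : SpecialLinearGroup (Fin 2) R} (hγ : HasCohnDecomposition γ)
    (b : R) : HasCohnDecomposition (γ * CohnMatrix b) := by
  obtain ⟨l, ω, hl, rfl⟩ := hγ
  obtain ⟨l', ω', hl', h⟩ := exists_cohnProd_mul_cohnMatrix hl ((ω : R) ^ 2 * b)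
  have hcomm : diagUnit ω * CohnMatrix b = CohnMatrix ((ω : R) ^ 2 * b) * diagUnit ω⁻¹ := by
    rw [← diagUnit_mul_cohnMatrix_mul_diagUnit, mul_assoc, diagUnit_mul, mul_inv_cancel,
      diagUnit_one, mul_one]
  refine ⟨l', ω' * ω⁻¹, hl', ?_⟩
  rw [mul_assoc, hcomm, ← mul_assoc, h, mul_assoc, diagUnit_mul]

theorem mul_of_triangular {γ t : SpecialLinearGroup (Fin 2) R} (hγ : HasCohnDecomposition γ)
    (ht : t.1 1 0 = 0 ∨ t.1 0 1 = 0) : HasCohnDecomposition (γ * t) := by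
  obtain ⟨x, y, ω, rfl⟩ : ∃ x y ω, t = CohnMatrix x * CohnMatrix y * diagUnit ω := by
    rcases ht with ht | ht
    · obtain ⟨x, ω, rfl⟩ := exists_eq_cohnMatrix_mul_cohnMatrix_zero_mul_diagUnit t ht
      exact ⟨x, 0, ω, rfl⟩
    · obtain ⟨y, ω, rfl⟩ := exists_eq_cohnMatrix_zero_mul_cohnMatrix_mul_diagUnit t ht
      exact ⟨0, y, ω, rfl⟩
  simpa only [mul_assoc] using ((hγ.mul_cohnMatrix x).mul_cohnMatrix y).mul_diagUnit ω

end HasCohnDecomposition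

theorem hasCohnDecomposition_of_mem_elemSubgroup {γ : SpecialLinearGroup (Fin 2) R}
    (hγ : γ ∈ ElemSubgroup R) : HasCohnDecomposition γ := by
  induction hγ using Subgroup.closure_induction_right with
  | one => exact .one
  | mul_right _ _ t ht h => exact h.mul_of_triangular ht
  | mul_inv_cancel _ _ t ht h =>
    refine h.mul_of_triangular ?_
    simpa [SpecialLinearGroup.SL2_inv_expl] using ht

end

/-- Every element of `E(2,R)` is a product `W(a₁) ⋯ W(a_k) · diag(ω, ω⁻¹)` where
`a_i ∉ {0, 1, -1}` whenever `1 < i < k` (1-indexed) and `ω` is a unit. -/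
theorem cohn_decomposition {R : Type*} [CommRing R]
    (γ : Matrix.SpecialLinearGroup (Fin 2) R) (hγ : γ ∈ ElemSubgroup R) :
    ∃ (k : ℕ) (a : Fin k → R) (ω : Rˣ),
      (∀ i : Fin k, 0 < (i : ℕ) → (i : ℕ) < k - 1 →
        a i ≠ 0 ∧ a i ≠ 1 ∧ a i ≠ -1) ∧
      γ = (List.ofFn fun i => CohnMatrix (a i)).prod *
        ⟨!![(ω : R), 0; 0, ((ω⁻¹ : Rˣ) : R)], by
          simp [Matrix.det_fin_two_of, ← Units.val_mul]⟩ := by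
  obtain ⟨l, ω, hl, rfl⟩ := hasCohnDecomposition_of_mem_elemSubgroup hγ
  refine ⟨l.length, fun i ↦ l[i], ω, fun i h0 hi ↦ hl i (by omega) h0, ?_⟩
  change _ = (List.ofFn fun i : Fin l.length ↦ CohnMatrix l[(i : ℕ)]).prod * diagUnit ω
  rw [List.ofFn_getElem_eq_map]
  rfl
end

section
/- Let x, y, z be elements of the Hamilton quaternions ℍ = Quaternion ℝ that are linearly independent over ℝ. Then there exist u, v ∈ {x, y, z} (not necessarily distinct) such that the product u·v does not lie in the ℝ-linear span of {x, y, z}; equivalently, x, y, z, u·v are linearly independent over ℝ. -/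
open Quaternion Module

/-!
If every product of two of `x, y, z` lay in `V = span {x, y, z}`, then `V` would be closed
under multiplication. Left multiplication by a nonzero element of `V` is injective on `V`,
hence onto, so `1 ∈ V` and `V` is a 3-dimensional subalgebra of `ℍ`. A finite-dimensional
subalgebra of a domain is a division ring, over which `ℍ` is a vector space, so its dimension
divides `dim ℍ = 4`, which `3` does not.
-/

theorem Submodule.one_mem_of_mul_mem {F A : Type*} [Field F] [Ring A] [NoZeroDivisors A]
    [Algebra F A] (V : Submodule F A) [FiniteDimensional F V]
    (hmul : ∀ a b, a ∈ V → b ∈ V → a * b ∈ V) {x : A} (hx : x ∈ V) (hx0 : x ≠ 0) :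
    (1 : A) ∈ V := by
  let mulLeft : V →ₗ[F] V :=
    (LinearMap.mulLeft F x).restrict fun b hb => hmul x b hx hb
  have hinj : Function.Injective mulLeft := fun a b hab =>
    Subtype.ext (mul_left_cancel₀ hx0 (congrArg Subtype.val hab))
  obtain ⟨y, hy⟩ := LinearMap.injective_iff_surjective.mp hinj ⟨x, hx⟩
  have hxy : x * y = x * 1 := by rw [mul_one]; exact congrArg Subtype.val hy
  exact mul_left_cancel₀ hx0 hxy ▸ y.2

theorem Subalgebra.finrank_dvd_finrank {F A : Type*} [Field F] [Ring A] [IsDomain A]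
    [Algebra F A] [FiniteDimensional F A] (B : Subalgebra F A) :
    finrank F B ∣ finrank F A :=
  letI := divisionRingOfFiniteDimensional F B
  ⟨_, (finrank_mul_finrank F B A).symm⟩

theorem Submodule.span_mul_span_le_span {R A : Type*} [CommSemiring R] [Semiring A]
    [Algebra R A] {s : Set A} (hs : ∀ u ∈ s, ∀ v ∈ s, u * v ∈ span R s) :
    span R s * span R s ≤ span R s := by
  rw [span_mul_span, span_le]
  rintro _ ⟨u, hu, v, hv, rfl⟩
  exact hs u hu v hv

theorem LinearIndependent.fin_four_of_notMem_span {K M : Type*} [DivisionRing K]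
    [AddCommGroup M] [Module K M] {x y z w : M} (h : LinearIndependent K ![x, y, z])
    (hw : w ∉ Submodule.span K {x, y, z}) : LinearIndependent K ![x, y, z, w] := by
  have hsnoc : ![x, y, z, w] = Fin.snoc ![x, y, z] w := by
    funext i; fin_cases i <;> rfl
  rw [hsnoc, linearIndependent_finSnoc]
  exact ⟨h, by rwa [Matrix.range_cons, Matrix.range_cons_cons_empty, Set.singleton_union]⟩

theorem LinearIndependent.finrank_span_fin_three {K M : Type*} [DivisionRing K]
    [AddCommGroup M] [Module K M] {x y z : M} (h : LinearIndependent K ![x, y, z]) :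
    finrank K (Submodule.span K {x, y, z}) = 3 := by
  have := finrank_span_eq_card h
  rwa [Matrix.range_cons, Matrix.range_cons_cons_empty, Set.singleton_union, Fintype.card_fin]
    at this

/-- If `x, y, z ∈ ℍ` are linearly independent over `ℝ`, then some product `u·v` with
`u, v ∈ {x, y, z}` lies outside the `ℝ`-span of `{x, y, z}`; equivalently
`x, y, z, u·v` are linearly independent over `ℝ`. -/
theorem exists_product_not_in_span (x y z : ℍ[ℝ])
    (h : LinearIndependent ℝ ![x, y, z]) :
    ∃ u ∈ ({x, y, z} : Set ℍ[ℝ]), ∃ v ∈ ({x, y, z} : Set ℍ[ℝ]),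
      u * v ∉ Submodule.span ℝ ({x, y, z} : Set ℍ[ℝ]) ∧
      LinearIndependent ℝ ![x, y, z, u * v] := by
  suffices ∃ u ∈ ({x, y, z} : Set ℍ[ℝ]), ∃ v ∈ ({x, y, z} : Set ℍ[ℝ]),
      u * v ∉ Submodule.span ℝ ({x, y, z} : Set ℍ[ℝ]) by
    obtain ⟨u, hu, v, hv, huv⟩ := this
    exact ⟨u, hu, v, hv, huv, h.fin_four_of_notMem_span huv⟩
  by_contra! hclosed
  set V := Submodule.span ℝ ({x, y, z} : Set ℍ[ℝ])
  have hmul : ∀ a b, a ∈ V → b ∈ V → a * b ∈ V := fun a b ha hb =>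
    Submodule.span_mul_span_le_span hclosed (Submodule.mul_mem_mul ha hb)
  have hone : (1 : ℍ[ℝ]) ∈ V := V.one_mem_of_mul_mem hmul
    (Submodule.subset_span (Set.mem_insert x _)) (by simpa using h.ne_zero 0)
  have hdvd : finrank ℝ V ∣ finrank ℝ ℍ[ℝ] :=
    (V.toSubalgebra hone hmul).finrank_dvd_finrank
  rw [h.finrank_span_fin_three, Quaternion.finrank_eq_four] at hdvd
  norm_num at hdvd
end

section
/- There exist constants C > 0 and d₀ ≥ 23 such that for every real number d ≥ d₀ the following holds: let P = {s·(1, 0) + t·(1/2, √d/2) : s, t ∈ [0, 1]} ⊆ ℝ² be the parallelogram spanned by (1, 0) and (1/2, √d/2), and let B be the closed disk of center (1/2, (d−1)/(4√d)) and radius √(d² − 14d + 1)/(4√d). Then the two-dimensional Lebesgue measure of P \ B satisfies vol(P \ B) ≤ √d/2 − √(d(d² − 22d − 7))/(2(d+1)) ≤ 6/√d + C·d^{−3/2}. -/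
/-!
The parallelogram is the image of the unit square under `(s, t) ↦ s • u + t • v`, with
`u = (1, 0)`, `v = (1/2, √d/2)`, a linear map of determinant `√d/2`. Expanding the squared
distance to the center, the point `s • u + t • v` (`s ∈ [0, 1]`, `t ≥ 0`) lies in the disk as
soon as `(d + 1) t² - (d - 3) t + 4 ≤ 0`, i.e. as soon as `t` lies between the roots
`((d - 3) ± √(d² - 22d - 7)) / (2(d + 1))`. Hence the part outside the disk is covered by the
image of the unit square minus a strip of width `√(d² - 22d - 7) / (d + 1)`, which is the first
bound. The second follows from `(d + 1)² - (d² - 22d - 7) = 24d + 8` and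
`√(d² - 22d - 7) ≥ d - 12`.
-/

open MeasureTheory Set Real

def parallelogram {E : Type*} [AddCommMonoid E] [Module ℝ E] (u v : E) (I J : Set ℝ) : Set E :=
  {p | ∃ s ∈ I, ∃ t ∈ J, p = s • u + t • v}

theorem EuclideanSpace.volume_setOf_forall_mem {ι : Type*} [Fintype ι] (s : ι → Set ℝ) :
    volume {x : EuclideanSpace ℝ ι | ∀ i, x i ∈ s i} = ∏ i, volume (s i) := by
  have := (EuclideanSpace.volume_preserving_symm_measurableEquiv_toLp ι).measure_preimage_equiv
    (univ.pi s)
  rw [volume_pi_pi] at this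
  convert this using 2
  ext x
  simp

theorem parallelogram_eq_image_toLpLin (u v : EuclideanSpace ℝ (Fin 2)) (I J : Set ℝ) :
    parallelogram u v I J =
      Matrix.toLpLin 2 2 !![u 0, v 0; u 1, v 1] '' {x | ∀ i, x i ∈ ![I, J] i} := by
  ext p
  constructor
  · rintro ⟨s, hs, t, ht, rfl⟩
    refine ⟨!₂[s, t], fun i => ?_, ?_⟩
    · fin_cases i <;> simpa
    · ext i
      fin_cases i <;> simp [Matrix.toLpLin_apply]
  · rintro ⟨x, hx, rfl⟩
    refine ⟨x 0, hx 0, x 1, hx 1, ?_⟩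
    ext i
    fin_cases i <;> simp [Matrix.toLpLin_apply, dotProduct, Fin.sum_univ_two] <;> ring

theorem volume_parallelogram (u v : EuclideanSpace ℝ (Fin 2)) (I J : Set ℝ) :
    volume (parallelogram u v I J) =
      ENNReal.ofReal |u 0 * v 1 - v 0 * u 1| * (volume I * volume J) := by
  rw [parallelogram_eq_image_toLpLin, Measure.addHaar_image_linearMap, LinearMap.det_toLpLin,
    Matrix.det_fin_two_of, EuclideanSpace.volume_setOf_forall_mem, Fin.prod_univ_two]
  rfl

theorem Real.volume_Icc_diff_Icc {a b c e : ℝ} (hac : a ≤ c) (hce : c ≤ e) (heb : e ≤ b) :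
    volume (Icc a b \ Icc c e) = ENNReal.ofReal ((b - a) - (e - c)) := by
  rw [measure_sdiff (Icc_subset_Icc hac heb) measurableSet_Icc.nullMeasurableSet
    measure_Icc_lt_top.ne, Real.volume_Icc, Real.volume_Icc,
    ← ENNReal.ofReal_sub _ (sub_nonneg.2 hce)]

theorem quadratic_nonpos_of_mem_Icc {a b c w t : ℝ} (ha : 0 < a)
    (hw : w ^ 2 = b ^ 2 - 4 * a * c) (ht : t ∈ Icc ((b - w) / (2 * a)) ((b + w) / (2 * a))) :
    a * t ^ 2 - b * t + c ≤ 0 := by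
  obtain ⟨h₁, h₂⟩ := ht
  rw [div_le_iff₀ (by positivity)] at h₁
  rw [le_div_iff₀ (by positivity)] at h₂
  have : (2 * a * t - b) ^ 2 ≤ w ^ 2 := sq_le_sq' (by linarith) (by linarith)
  nlinarith

theorem mem_closedBall_of_quadratic_nonpos {d s t : ℝ} (hd : 0 < d) (hs : s ∈ Icc (0 : ℝ) 1)
    (ht : 0 ≤ t) (hq : (d + 1) * t ^ 2 - (d - 3) * t + 4 ≤ 0) :
    s • (!₂[1, 0] : EuclideanSpace ℝ (Fin 2)) + t • !₂[1 / 2, √d / 2] ∈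
      Metric.closedBall (!₂[1 / 2, (d - 1) / (4 * √d)] : EuclideanSpace ℝ (Fin 2))
        (√(d ^ 2 - 14 * d + 1) / (4 * √d)) := by
  have he : 0 < √d := sqrt_pos.2 hd
  have he2 : √d ^ 2 = d := sq_sqrt hd.le
  have hdist : (s + t * (1 / 2) - 1 / 2) ^ 2 + (t * (√d / 2) - (d - 1) / (4 * √d)) ^ 2 =
      (4 * d * (2 * s + t - 1) ^ 2 + (2 * t * d - (d - 1)) ^ 2) / (4 * √d) ^ 2 := by
    field_simp
    generalize √d = e at he2 ⊢
    subst he2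
    ring
  -- `|2s + t - 1| ≤ t + 1` reduces the numerator to `d² + 2d + 1 + 4d ((d + 1) t² - (d - 3) t)`
  have hnum : 4 * d * (2 * s + t - 1) ^ 2 + (2 * t * d - (d - 1)) ^ 2 ≤ d ^ 2 - 14 * d + 1 := by
    have : (2 * s + t - 1) ^ 2 ≤ (t + 1) ^ 2 :=
      sq_le_sq' (by linarith [hs.1]) (by linarith [hs.2])
    nlinarith
  have hr : √(d ^ 2 - 14 * d + 1) / (4 * √d) = √((d ^ 2 - 14 * d + 1) / (4 * √d) ^ 2) := by
    rw [sqrt_div' _ (by positivity), sqrt_sq (by positivity)]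
  rw [Metric.mem_closedBall, EuclideanSpace.dist_eq, Fin.sum_univ_two, hr]
  refine sqrt_le_sqrt ?_
  simp only [Real.dist_eq, sq_abs, PiLp.add_apply, PiLp.smul_apply, Matrix.cons_val_zero,
    Matrix.cons_val_one, Matrix.cons_val_fin_one, smul_eq_mul, mul_one, mul_zero, zero_add]
  rw [hdist]
  gcongr

theorem volume_parallelogram_diff_closedBall_le {d : ℝ} (hd : 3 ≤ d)
    (hD : 0 ≤ d ^ 2 - 22 * d - 7) :
    volume (parallelogram (!₂[1, 0] : EuclideanSpace ℝ (Fin 2)) !₂[1 / 2, √d / 2]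
        (Icc 0 1) (Icc 0 1) \
      Metric.closedBall (!₂[1 / 2, (d - 1) / (4 * √d)] : EuclideanSpace ℝ (Fin 2))
        (√(d ^ 2 - 14 * d + 1) / (4 * √d))) ≤
      ENNReal.ofReal (√d / 2 - √(d * (d ^ 2 - 22 * d - 7)) / (2 * (d + 1))) := by
  rw [sqrt_mul (by linarith)]
  set w := √(d ^ 2 - 22 * d - 7)
  have hw2 : w ^ 2 = (d - 3) ^ 2 - 4 * (d + 1) * 4 := by rw [sq_sqrt hD]; ring
  have hwd : w ≤ d - 3 := sqrt_le_iff.2 ⟨by linarith, by nlinarith⟩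
  set t₁ := (d - 3 - w) / (2 * (d + 1))
  set t₂ := (d - 3 + w) / (2 * (d + 1))
  have ht₁ : 0 ≤ t₁ := div_nonneg (by linarith) (by linarith)
  have ht₁₂ : t₁ ≤ t₂ :=
    div_le_div_of_nonneg_right (by linarith [sqrt_nonneg (d ^ 2 - 22 * d - 7)]) (by linarith)
  have ht₂ : t₂ ≤ 1 := (div_le_one (by linarith)).2 (by linarith)
  have hsub : parallelogram !₂[1, 0] !₂[1 / 2, √d / 2] (Icc 0 1) (Icc 0 1) \
      Metric.closedBall !₂[1 / 2, (d - 1) / (4 * √d)] (√(d ^ 2 - 14 * d + 1) / (4 * √d)) ⊆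
      parallelogram !₂[1, 0] !₂[1 / 2, √d / 2] (Icc 0 1) (Icc 0 1 \ Icc t₁ t₂) := by
    rintro _ ⟨⟨s, hs, t, ht, rfl⟩, hB⟩
    refine ⟨s, hs, t, ⟨ht, fun htI => hB ?_⟩, rfl⟩
    refine mem_closedBall_of_quadratic_nonpos (by linarith) hs ht.1 ?_
    exact quadratic_nonpos_of_mem_Icc (by linarith) hw2 htI
  have hwidth : t₂ - t₁ = w / (d + 1) := by
    simp only [t₁, t₂]
    field_simp
    ring
  calc _ ≤ _ := measure_mono hsub
    _ = _ := by
      rw [volume_parallelogram, Real.volume_Icc, Real.volume_Icc_diff_Icc ht₁ ht₁₂ ht₂,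
        ← ENNReal.ofReal_mul (by norm_num), ← ENNReal.ofReal_mul (abs_nonneg _)]
      congr 1
      simp only [Matrix.cons_val_zero, Matrix.cons_val_one, Matrix.cons_val_fin_one, one_mul,
        mul_zero, sub_zero]
      rw [hwidth, abs_of_nonneg (by positivity)]
      field_simp

theorem rpow_neg_three_halves {d : ℝ} (hd : 0 < d) : d ^ (-(3 : ℝ) / 2) = 1 / (d * √d) := by
  rw [neg_div, rpow_neg hd.le, show (3 : ℝ) / 2 = 1 + 1 / 2 by norm_num, rpow_add hd, rpow_one,
    ← sqrt_eq_rpow, one_div]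

theorem sqrt_div_two_sub_sqrt_mul_div_le {d : ℝ} (hd : 100 ≤ d) :
    √d / 2 - √(d * (d ^ 2 - 22 * d - 7)) / (2 * (d + 1)) ≤
      6 / √d + 1000 * d ^ (-(3 : ℝ) / 2) := by
  have hd0 : 0 < d := by linarith
  have he : 0 < √d := sqrt_pos.2 hd0
  have he2 : √d ^ 2 = d := sq_sqrt hd0.le
  have hD : 0 ≤ d ^ 2 - 22 * d - 7 := by nlinarith
  have hw2 : √(d ^ 2 - 22 * d - 7) ^ 2 = d ^ 2 - 22 * d - 7 := sq_sqrt hD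
  have hw : d - 12 ≤ √(d ^ 2 - 22 * d - 7) := (le_sqrt (by linarith) hD).2 (by nlinarith)
  set w := √(d ^ 2 - 22 * d - 7)
  have hgap : (d + 1 - w) * (2 * d - 11) ≤ 24 * d + 8 := by
    nlinarith [mul_nonneg (by nlinarith : 0 ≤ d + 1 - w) (by linarith : 0 ≤ w - (d - 12))]
  have hlhs : √d / 2 - √d * w / (2 * (d + 1)) = √d * (d + 1 - w) / (2 * (d + 1)) := by
    field_simp
  have hrhs : 6 / √d + 1000 * (1 / (d * √d)) = (6 * d + 1000) / (d * √d) := by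
    field_simp
  rw [sqrt_mul hd0.le, rpow_neg_three_halves hd0, hlhs, hrhs,
    div_le_div_iff₀ (by positivity) (by positivity)]
  have hcancel : √d * (d + 1 - w) * (d * √d) = d ^ 2 * (d + 1 - w) := by
    linear_combination (d * (d + 1 - w)) * he2
  rw [hcancel]
  nlinarith [mul_le_mul_of_nonneg_left hgap (by positivity : (0 : ℝ) ≤ d ^ 2)]

/-- There are constants `C > 0` and `d₀ ≥ 23` such that for all `d ≥ d₀`, the area of
the part of the fundamental parallelogram spanned by `(1,0)` and `(1/2, √d/2)` lying
outside the closed disk of center `(1/2, (d−1)/(4√d))` and radius `√(d²−14d+1)/(4√d)`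
is at most `√d/2 − √(d(d²−22d−7))/(2(d+1))`, which is at most `6/√d + C·d^{−3/2}`. -/
theorem area_outside_disk_bound_parallelogram :
    ∃ C : ℝ, 0 < C ∧ ∃ d₀ : ℝ, 23 ≤ d₀ ∧ ∀ d : ℝ, d₀ ≤ d →
      volume ({p : EuclideanSpace ℝ (Fin 2) |
            ∃ s ∈ Set.Icc (0 : ℝ) 1, ∃ t ∈ Set.Icc (0 : ℝ) 1,
              p = s • (!₂[1, 0] : EuclideanSpace ℝ (Fin 2)) +
                t • (!₂[1 / 2, Real.sqrt d / 2] : EuclideanSpace ℝ (Fin 2))} \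
          Metric.closedBall
            (!₂[1 / 2, (d - 1) / (4 * Real.sqrt d)] : EuclideanSpace ℝ (Fin 2))
            (Real.sqrt (d ^ 2 - 14 * d + 1) / (4 * Real.sqrt d)))
        ≤ ENNReal.ofReal
            (Real.sqrt d / 2 - Real.sqrt (d * (d ^ 2 - 22 * d - 7)) / (2 * (d + 1))) ∧
      Real.sqrt d / 2 - Real.sqrt (d * (d ^ 2 - 22 * d - 7)) / (2 * (d + 1))
        ≤ 6 / Real.sqrt d + C * d ^ (-(3 : ℝ) / 2) := by
  refine ⟨1000, by norm_num, 100, by norm_num, fun d hd => ⟨?_, ?_⟩⟩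
  · exact volume_parallelogram_diff_closedBall_le (by linarith) (by nlinarith)
  · exact sqrt_div_two_sub_sqrt_mul_div_le hd
end
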